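/- arXiv:2210.04779 — 2 statements merged into one kernel-verified Lean document; each statement's English description precedes it below -/
import Mathlib

section
/- Let d, n, v, D_0 ≥ 1 be integers, let D_j = 6^j·D_0 for every j ≥ 1, and let A ⊆ Z_n^d. Assume A_0 ⊆ A satisfies |A_0| ≥ 8v·(6n/D_0)^d, and that C_0 is a partition of A_0 such that every cluster C ∈ C_0 is ⌊D_0/(12v)⌋-connected and satisfies |C| ≥ v. Then (A_0, C_0) can be completed into a (v, D)-dormitory hierarchy (A_j, C_j)_{j ≤ J} on A such that |A_J| ≥ |A_0| − 4v·(6n/D_0)^d. -/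
/-- The distance on the torus `(ℤ/nℤ)^d`: the infimum of the sup-norm distances between
integer lifts of the two points. -/
noncomputable def torusDist {d n : ℕ} (x y : Fin d → ZMod n) : ℕ :=
  sInf {k : ℕ | ∃ a b : Fin d → ℤ,
    (∀ i, (a i : ZMod n) = x i) ∧ (∀ i, (b i : ZMod n) = y i) ∧
    (Finset.univ.sup fun i => (a i - b i).natAbs) = k}

/-- The closed ball of radius `r` around `x` in the torus `(ℤ/nℤ)^d`. -/
def torusBall {d n : ℕ} (x : Fin d → ZMod n) (r : ℕ) : Set (Fin d → ZMod n) :=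
  {y | torusDist x y ≤ r}

/-- A set `C ⊆ (ℤ/nℤ)^d` is `r`-connected if any two of its points can be joined by a
finite sequence of points of `C` whose consecutive terms are at distance at most `r`. -/
def torusRConnected {d n : ℕ} (r : ℕ) (C : Set (Fin d → ZMod n)) : Prop :=
  ∀ x ∈ C, ∀ y ∈ C, ∃ (k : ℕ) (f : ℕ → Fin d → ZMod n),
    f 0 = x ∧ f k = y ∧ (∀ j ≤ k, f j ∈ C) ∧ ∀ j < k, torusDist (f j) (f (j + 1)) ≤ r

/-- The diameter of a subset of the torus `(ℤ/nℤ)^d`. -/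
noncomputable def torusDiam {d n : ℕ} (C : Set (Fin d → ZMod n)) : ℕ :=
  sSup {k : ℕ | ∃ x ∈ C, ∃ y ∈ C, torusDist x y = k}

/-- `𝒞` is a partition of the set `A`: its members are non-empty, pairwise disjoint,
and their union is `A`. -/
def IsPartitionOf {α : Type*} (𝒞 : Set (Set α)) (A : Set α) : Prop :=
  (∀ C ∈ 𝒞, C.Nonempty) ∧ ⋃₀ 𝒞 = A ∧
    ∀ C ∈ 𝒞, ∀ C' ∈ 𝒞, C ≠ C' → Disjoint C C'

/-- A `(v, D)`-dormitory hierarchy on a set `A ⊆ (ℤ/nℤ)^d`: a decreasing sequence of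
subsets `A ⊇ A_0 ⊇ ⋯ ⊇ A_J` together with partitions `𝒞_j` of `A_j` such that:
(i) every cluster `C ∈ 𝒞_j` satisfies `|C| ≥ 2^⌊j/2⌋ v`;
(ii) every cluster `C ∈ 𝒞_{j+1} \ 𝒞_j` has diameter at most `D j` and is the union of
two clusters of `𝒞_j`;
(iii) the last partition `𝒞_J` consists of a single set. -/
structure DormitoryHierarchy (d n v : ℕ) (D : ℕ → ℕ) (A : Set (Fin d → ZMod n)) where
  J : ℕ
  level : ℕ → Set (Fin d → ZMod n)
  part : ℕ → Set (Set (Fin d → ZMod n))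
  level_zero_subset : level 0 ⊆ A
  level_antitone : ∀ j, j + 1 ≤ J → level (j + 1) ⊆ level j
  part_isPartition : ∀ j ≤ J, IsPartitionOf (part j) (level j)
  card_ge : ∀ j ≤ J, ∀ C ∈ part j, 2 ^ (j / 2) * v ≤ C.ncard
  merge : ∀ j, j + 1 ≤ J → ∀ C ∈ part (j + 1), C ∉ part j →
    torusDiam C ≤ D j ∧ ∃ C₀ ∈ part j, ∃ C₁ ∈ part j, C = C₀ ∪ C₁
  final : ∃ C, part J = {C}

/-!
The hierarchy is built in rounds of two levels. Call a partition admissible for `(v, D₀)` if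
its clusters have at least `v` points and satisfy `12 v · diam C ≤ |C| D₀`; clusters that are
`⌊D₀ / (12 v)⌋`-connected are admissible. In a round, the small clusters (fewer than `2 v`
points) have diameter below `D₀ / 6`, and pairs of them whose union has diameter at most `D₀`
are merged greedily. If `n ≤ D₀` every pair qualifies, so at most one small cluster is left,
and it is merged with any other cluster. Otherwise the leftover small clusters are pairwise
more than `D₀ / 5` apart, so there are at most `(6 n / D₀) ^ d` of them; they are discarded,
losing at most `2 v (6 n / D₀) ^ d` points. The result is admissible for `(2 v, 36 D₀)`, so the
next round is the same construction with rescaled parameters; the losses then form a geometric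
series of sum at most `4 v (6 n / D₀) ^ d`, and `|A₀| ≥ 8 v (6 n / D₀) ^ d` keeps every level
non-empty.
-/

section TorusMetric

variable {d n : ℕ}

lemma torusDist_le_sup {x y : Fin d → ZMod n} (a b : Fin d → ℤ)
    (ha : ∀ i, (a i : ZMod n) = x i) (hb : ∀ i, (b i : ZMod n) = y i) :
    torusDist x y ≤ Finset.univ.sup fun i => (a i - b i).natAbs :=
  Nat.sInf_le ⟨a, b, ha, hb, rfl⟩

lemma exists_lifts_sup_eq_torusDist (x y : Fin d → ZMod n) :
    ∃ a b : Fin d → ℤ, (∀ i, (a i : ZMod n) = x i) ∧ (∀ i, (b i : ZMod n) = y i) ∧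
      (Finset.univ.sup fun i => (a i - b i).natAbs) = torusDist x y := by
  refine Nat.sInf_mem (s := {k | ∃ a b : Fin d → ℤ, (∀ i, (a i : ZMod n) = x i) ∧
    (∀ i, (b i : ZMod n) = y i) ∧ (Finset.univ.sup fun i => (a i - b i).natAbs) = k}) ?_
  exact ⟨_, fun i => ((x i).cast : ℤ), fun i => ((y i).cast : ℤ),
    fun i => ZMod.intCast_zmod_cast _, fun i => ZMod.intCast_zmod_cast _, rfl⟩

lemma torusDist_comm (x y : Fin d → ZMod n) : torusDist x y = torusDist y x := by
  have key : ∀ x y : Fin d → ZMod n, torusDist x y ≤ torusDist y x := by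
    intro x y
    obtain ⟨a, b, ha, hb, hab⟩ := exists_lifts_sup_eq_torusDist y x
    refine (torusDist_le_sup b a hb ha).trans (le_of_eq ?_)
    rw [← hab]
    congr 1
    funext i
    rw [← Int.natAbs_neg, neg_sub]
  exact le_antisymm (key x y) (key y x)

lemma torusDist_triangle (x y z : Fin d → ZMod n) :
    torusDist x z ≤ torusDist x y + torusDist y z := by
  obtain ⟨a, b, ha, hb, hab⟩ := exists_lifts_sup_eq_torusDist x y
  obtain ⟨b', c, hb', hc, hbc⟩ := exists_lifts_sup_eq_torusDist y z
  -- translate the second pair of lifts so that both lifts of `y` agree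
  have hc' : ∀ i, ((c i + (b i - b' i) : ℤ) : ZMod n) = z i := by
    intro i
    push_cast
    rw [hc, hb, hb', sub_self, add_zero]
  refine (torusDist_le_sup a _ ha hc').trans (Finset.sup_le fun i _ => ?_)
  rw [← hab, ← hbc]
  calc (a i - (c i + (b i - b' i))).natAbs = ((a i - b i) + (b' i - c i)).natAbs := by
        ring_nf
    _ ≤ (a i - b i).natAbs + (b' i - c i).natAbs := Int.natAbs_add_le _ _
    _ ≤ _ := add_le_add (Finset.le_sup (f := fun i => (a i - b i).natAbs) (Finset.mem_univ i))
        (Finset.le_sup (f := fun i => (b' i - c i).natAbs) (Finset.mem_univ i))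

@[simp]
lemma torusDist_self (x : Fin d → ZMod n) : torusDist x x = 0 := by
  refine Nat.eq_zero_of_le_zero ((torusDist_le_sup (fun i => ((x i).cast : ℤ))
    (fun i => ((x i).cast : ℤ)) (fun i => ZMod.intCast_zmod_cast _)
    (fun i => ZMod.intCast_zmod_cast _)).trans ?_)
  simp

lemma torusDist_lt [NeZero n] (x y : Fin d → ZMod n) : torusDist x y < n := by
  refine (torusDist_le_sup (fun i => ((x i).val : ℤ)) (fun i => ((y i).val : ℤ))
    (fun i => by simp) (fun i => by simp)).trans_lt ?_
  rw [Finset.sup_lt_iff (Nat.pos_of_neZero n)]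
  intro i _
  have := ZMod.val_lt (x i)
  have := ZMod.val_lt (y i)
  omega

end TorusMetric

section TorusDiam

variable {d n : ℕ}

lemma torusDiam_le {C : Set (Fin d → ZMod n)} {m : ℕ}
    (h : ∀ x ∈ C, ∀ y ∈ C, torusDist x y ≤ m) : torusDiam C ≤ m := by
  rcases Set.eq_empty_or_nonempty {k : ℕ | ∃ x ∈ C, ∃ y ∈ C, torusDist x y = k} with he | hne
  · rw [torusDiam, he, csSup_empty]
    exact Nat.zero_le _
  · exact csSup_le hne (by rintro k ⟨x, hx, y, hy, rfl⟩; exact h x hx y hy)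

variable [NeZero n]

lemma torusDist_le_torusDiam {C : Set (Fin d → ZMod n)} {x y : Fin d → ZMod n}
    (hx : x ∈ C) (hy : y ∈ C) : torusDist x y ≤ torusDiam C :=
  le_csSup ⟨n, by rintro k ⟨a, -, b, -, rfl⟩; exact (torusDist_lt a b).le⟩ ⟨x, hx, y, hy, rfl⟩

lemma torusDiam_lt (C : Set (Fin d → ZMod n)) : torusDiam C < n :=
  (torusDiam_le (m := n - 1) fun x _ y _ => Nat.le_pred_of_lt (torusDist_lt x y)).trans_lt
    (Nat.sub_lt (Nat.pos_of_neZero n) one_pos)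

lemma torusDist_le_of_mem_of_mem {C₀ C₁ : Set (Fin d → ZMod n)} {p q x y : Fin d → ZMod n}
    (hp : p ∈ C₀) (hq : q ∈ C₁) (hx : x ∈ C₀) (hy : y ∈ C₁) :
    torusDist x y ≤ torusDiam C₀ + torusDist p q + torusDiam C₁ :=
  calc torusDist x y ≤ torusDist x p + torusDist p q + torusDist q y :=
        (torusDist_triangle x q y).trans
          (Nat.add_le_add_right (torusDist_triangle x p q) _)
    _ ≤ _ := by
        gcongr
        exacts [torusDist_le_torusDiam hx hp, torusDist_le_torusDiam hq hy]

lemma torusDiam_union_le {C₀ C₁ : Set (Fin d → ZMod n)} {p q : Fin d → ZMod n}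
    (hp : p ∈ C₀) (hq : q ∈ C₁) :
    torusDiam (C₀ ∪ C₁) ≤ torusDiam C₀ + torusDist p q + torusDiam C₁ := by
  apply torusDiam_le
  rintro x (hx | hx) y (hy | hy)
  · exact (torusDist_le_torusDiam hx hy).trans (by omega)
  · exact torusDist_le_of_mem_of_mem hp hq hx hy
  · rw [torusDist_comm]
    exact torusDist_le_of_mem_of_mem hp hq hy hx
  · exact (torusDist_le_torusDiam hx hy).trans (by omega)

end TorusDiam

section Connected

variable {d n : ℕ} {r : ℕ} {C : Set (Fin d → ZMod n)}

def torusProximityGraph (r : ℕ) (C : Set (Fin d → ZMod n)) : SimpleGraph C :=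
  SimpleGraph.fromRel fun a b => torusDist (a : Fin d → ZMod n) b ≤ r

lemma torusDist_le_of_walk {a b : C} (w : (torusProximityGraph r C).Walk a b) :
    torusDist (a : Fin d → ZMod n) b ≤ w.length * r := by
  induction w with
  | nil => simp
  | @cons a b c hadj _ ih =>
    have hab : torusDist (a : Fin d → ZMod n) b ≤ r := by
      rcases hadj.2 with h | h
      · exact h
      · rwa [torusDist_comm]
    rw [SimpleGraph.Walk.length_cons]
    linarith [torusDist_triangle (a : Fin d → ZMod n) b c]

lemma reachable_of_torusRConnected (hC : torusRConnected r C) (x y : C) :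
    (torusProximityGraph r C).Reachable x y := by
  obtain ⟨k, f, hf0, hfk, hfC, hstep⟩ := hC x x.2 y y.2
  have key : ∀ j (hj : j ≤ k), (torusProximityGraph r C).Reachable x ⟨f j, hfC j hj⟩ := by
    intro j hj
    induction j with
    | zero => simp_rw [hf0]; rfl
    | succ j ih =>
      refine (ih (by omega)).trans ?_
      by_cases heq : f j = f (j + 1)
      · simp_rw [heq]; rfl
      · exact SimpleGraph.Adj.reachable ⟨fun h => heq (congrArg Subtype.val h),
          Or.inl (hstep j (by omega))⟩
  simpa [hfk] using key k le_rfl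

lemma torusDist_le_of_torusRConnected [NeZero n] (hC : torusRConnected r C) {x y : Fin d → ZMod n}
    (hx : x ∈ C) (hy : y ∈ C) : torusDist x y ≤ (C.ncard - 1) * r := by
  classical
  obtain ⟨w⟩ := reachable_of_torusRConnected hC ⟨x, hx⟩ ⟨y, hy⟩
  have hlen : w.bypass.length < C.ncard := by
    rw [Set.ncard_eq_toFinset_card', Set.toFinset_card]
    exact w.bypass_isPath.length_lt
  exact (torusDist_le_of_walk w.bypass).trans (Nat.mul_le_mul_right _ (by omega))

end Connected

section Packing

lemma natAbs_sub_le_of_div_eq {a b m : ℕ} (h : a / (m + 1) = b / (m + 1)) :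
    ((a : ℤ) - b).natAbs ≤ m := by
  have ha := Nat.div_add_mod a (m + 1)
  have hb := Nat.div_add_mod b (m + 1)
  have := Nat.mod_lt a (show 0 < m + 1 by omega)
  have := Nat.mod_lt b (show 0 < m + 1 by omega)
  rw [h] at ha
  generalize (m + 1) * (b / (m + 1)) = t at ha hb
  omega

variable {d n : ℕ} [NeZero n]

/-- Points pairwise more than `s` apart lie in distinct cells of the grid of mesh `s + 1`,
which has `⌈n / (s + 1)⌉ ^ d` cells. -/
lemma ncard_le_of_pairwise_lt_torusDist (s : ℕ) {P : Set (Fin d → ZMod n)}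
    (hP : P.Pairwise fun x y => s < torusDist x y) :
    P.ncard ≤ ((n + s) / (s + 1)) ^ d := by
  have hcell : ∀ (x : Fin d → ZMod n) i, (x i).val / (s + 1) < (n + s) / (s + 1) := by
    intro x i
    rw [Nat.div_lt_iff_lt_mul s.succ_pos]
    have := ZMod.val_lt (x i)
    have := Nat.div_mul_le_self (n + s) (s + 1)
    have := Nat.lt_div_mul_add (a := n + s) s.succ_pos
    nlinarith
  let cell : (Fin d → ZMod n) → Fin d → Fin ((n + s) / (s + 1)) :=
    fun x i => ⟨(x i).val / (s + 1), hcell x i⟩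
  have hinj : Set.InjOn cell P := by
    intro x hx y hy hxy
    by_contra hne
    refine (hP hx hy hne).not_ge ((torusDist_le_sup (fun i => ((x i).val : ℤ))
      (fun i => ((y i).val : ℤ)) (fun i => by simp) (fun i => by simp)).trans ?_)
    exact Finset.sup_le fun i _ => natAbs_sub_le_of_div_eq (Fin.ext_iff.mp (congrFun hxy i))
  calc P.ncard ≤ (Set.univ : Set (Fin d → Fin ((n + s) / (s + 1)))).ncard :=
        Set.ncard_le_ncard_of_injOn cell (fun _ _ => Set.mem_univ _) hinj Set.finite_univ
    _ = ((n + s) / (s + 1)) ^ d := by simp [Set.ncard_univ]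

end Packing

section Partition

variable {α : Type*} {𝒞 : Set (Set α)} {A : Set α}

lemma IsPartitionOf.subset (h : IsPartitionOf 𝒞 A) {C : Set α} (hC : C ∈ 𝒞) : C ⊆ A :=
  h.2.1 ▸ Set.subset_sUnion_of_mem hC

lemma IsPartitionOf.ncard_union [Finite α] (h : IsPartitionOf 𝒞 A) {C₀ C₁ : Set α}
    (h₀ : C₀ ∈ 𝒞) (h₁ : C₁ ∈ 𝒞) (hne : C₀ ≠ C₁) :
    (C₀ ∪ C₁).ncard = C₀.ncard + C₁.ncard :=
  Set.ncard_union_eq (h.2.2 _ h₀ _ h₁ hne) (Set.toFinite _) (Set.toFinite _)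

lemma IsPartitionOf.of_subset (h : IsPartitionOf 𝒞 A) {𝒟 : Set (Set α)} (h𝒟 : 𝒟 ⊆ 𝒞) :
    IsPartitionOf 𝒟 (⋃₀ 𝒟) :=
  ⟨fun C hC => h.1 C (h𝒟 hC), rfl, fun C hC C' hC' => h.2.2 C (h𝒟 hC) C' (h𝒟 hC')⟩

lemma IsPartitionOf.merge (h : IsPartitionOf 𝒞 A) {C₀ C₁ : Set α} (h₀ : C₀ ∈ 𝒞)
    (h₁ : C₁ ∈ 𝒞) :
    IsPartitionOf (insert (C₀ ∪ C₁) (𝒞 \ {C₀, C₁})) A := by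
  obtain ⟨hnonempty, hunion, hdisj⟩ := h
  refine ⟨?_, ?_, ?_⟩
  · rintro C (rfl | ⟨hC, -⟩)
    exacts [(hnonempty C₀ h₀).mono Set.subset_union_left, hnonempty C hC]
  · rw [← hunion, Set.sUnion_insert]
    ext x
    simp only [Set.mem_union, Set.mem_sUnion, Set.mem_sdiff, Set.mem_insert_iff,
      Set.mem_singleton_iff]
    constructor
    · rintro ((hx | hx) | ⟨C, ⟨hC, -⟩, hx⟩)
      exacts [⟨C₀, h₀, hx⟩, ⟨C₁, h₁, hx⟩, ⟨C, hC, hx⟩]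
    · rintro ⟨C, hC, hx⟩
      by_cases hC₀ : C = C₀
      · exact Or.inl (Or.inl (hC₀ ▸ hx))
      by_cases hC₁ : C = C₁
      · exact Or.inl (Or.inr (hC₁ ▸ hx))
      exact Or.inr ⟨C, ⟨hC, by tauto⟩, hx⟩
  · have hpd : (𝒞 \ {C₀, C₁}).PairwiseDisjoint id :=
      fun C hC C' hC' => hdisj C hC.1 C' hC'.1
    have hpd' := hpd.insert (i := C₀ ∪ C₁) fun C ⟨hC, hC01⟩ _ =>
      Set.disjoint_union_left.mpr ⟨hdisj C₀ h₀ C hC fun h => hC01 (by simp [← h]),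
        hdisj C₁ h₁ C hC fun h => hC01 (by simp [← h])⟩
    exact fun C hC C' hC' => hpd' hC hC'

/-- A greedy maximal matching, for `adj`, of the small members of a partition. -/
lemma IsPartitionOf.exists_pairing [Finite α] (small : Set α → Prop)
    (adj : Set α → Set α → Prop) (h : IsPartitionOf 𝒞 A)
    (hsmall : ∀ C₀ ∈ 𝒞, ∀ C₁ ∈ 𝒞, C₀ ≠ C₁ → small C₀ → small C₁ → ¬ small (C₀ ∪ C₁)) :
    ∃ 𝒞' : Set (Set α), IsPartitionOf 𝒞' A ∧
      (∀ C ∈ 𝒞', C ∉ 𝒞 → ∃ C₀ ∈ 𝒞, ∃ C₁ ∈ 𝒞,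
        C₀ ≠ C₁ ∧ small C₀ ∧ small C₁ ∧ adj C₀ C₁ ∧ C = C₀ ∪ C₁) ∧
      (∀ C ∈ 𝒞', ∀ C' ∈ 𝒞', C ≠ C' → small C → small C' → ¬ adj C C') := by
  classical
  induction hk : 𝒞.ncard using Nat.strong_induction_on generalizing 𝒞 with
  | _ k ih =>
  by_cases hpair : ∃ C₀ ∈ 𝒞, ∃ C₁ ∈ 𝒞, C₀ ≠ C₁ ∧ small C₀ ∧ small C₁ ∧ adj C₀ C₁
  · obtain ⟨C₀, h₀, C₁, h₁, hne, hs₀, hs₁, hadj⟩ := hpair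
    have hlt : (insert (C₀ ∪ C₁) (𝒞 \ {C₀, C₁})).ncard < k := by
      have hsub : {C₀, C₁} ⊆ 𝒞 := Set.insert_subset h₀ (Set.singleton_subset_iff.mpr h₁)
      have := Set.ncard_sdiff hsub
      have := Set.ncard_insert_le (C₀ ∪ C₁) (𝒞 \ {C₀, C₁})
      have := Set.ncard_le_ncard hsub (Set.toFinite 𝒞)
      rw [Set.ncard_pair hne] at *
      omega
    set 𝒞₁ := insert (C₀ ∪ C₁) (𝒞 \ {C₀, C₁})
    have hsmall₁ : ∀ C ∈ 𝒞₁, small C → C ∈ 𝒞 := by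
      rintro C (rfl | ⟨hC, -⟩) hs
      exacts [absurd hs (hsmall C₀ h₀ C₁ h₁ hne hs₀ hs₁), hC]
    obtain ⟨𝒞', hpart, hmerge, hfar⟩ := ih _ hlt (h.merge h₀ h₁)
      (fun D₀ hD₀ D₁ hD₁ hne' hs₀' hs₁' =>
        hsmall D₀ (hsmall₁ D₀ hD₀ hs₀') D₁ (hsmall₁ D₁ hD₁ hs₁') hne' hs₀' hs₁') rfl
    refine ⟨𝒞', hpart, fun C hC hC𝒞 => ?_, hfar⟩
    by_cases hC₁ : C ∈ 𝒞₁
    · rcases hC₁ with rfl | ⟨hC, -⟩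
      exacts [⟨C₀, h₀, C₁, h₁, hne, hs₀, hs₁, hadj, rfl⟩, absurd hC hC𝒞]
    · obtain ⟨D₀, hD₀, D₁, hD₁, hne', hs₀', hs₁', hadj', rfl⟩ := hmerge C hC hC₁
      exact ⟨D₀, hsmall₁ D₀ hD₀ hs₀', D₁, hsmall₁ D₁ hD₁ hs₁', hne', hs₀', hs₁', hadj', rfl⟩
  · push Not at hpair
    exact ⟨𝒞, h, fun C hC hC' => absurd hC hC', hpair⟩

lemma ncard_sUnion_le [Finite α] {𝒮 : Set (Set α)} {m : ℕ} (h : ∀ C ∈ 𝒮, C.ncard ≤ m) :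
    (⋃₀ 𝒮).ncard ≤ 𝒮.ncard * m := by
  obtain ⟨F, rfl⟩ := (Set.toFinite 𝒮).exists_finset_coe
  rw [Set.sUnion_eq_biUnion, Set.ncard_coe_finset, ← smul_eq_mul]
  exact (Finset.set_ncard_biUnion_le F id).trans (Finset.sum_le_card_nsmul _ _ _ h)

end Partition

section Rounds

variable {d n : ℕ} {v D₀ : ℕ} {A : Set (Fin d → ZMod n)} {𝒞 𝒞₁ : Set (Set (Fin d → ZMod n))}

/-- Condition (ii) of a dormitory hierarchy, for two consecutive partitions. -/
def IsMergeStep (D : ℕ) (𝒞 𝒞' : Set (Set (Fin d → ZMod n))) : Prop :=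
  ∀ C ∈ 𝒞', C ∉ 𝒞 → torusDiam C ≤ D ∧ ∃ C₀ ∈ 𝒞, ∃ C₁ ∈ 𝒞, C = C₀ ∪ C₁

lemma IsMergeStep.mono {D D' : ℕ} {𝒞' : Set (Set (Fin d → ZMod n))}
    (h : IsMergeStep D 𝒞 𝒞') (hD : D ≤ D') : IsMergeStep D' 𝒞 𝒞' :=
  fun C hC hC𝒞 => ⟨(h C hC hC𝒞).1.trans hD, (h C hC hC𝒞).2⟩

structure IsAdmissible (v D₀ : ℕ) (𝒞 : Set (Set (Fin d → ZMod n)))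
    (A : Set (Fin d → ZMod n)) : Prop where
  isPartitionOf : IsPartitionOf 𝒞 A
  le_ncard : ∀ C ∈ 𝒞, v ≤ C.ncard
  diam_le : ∀ C ∈ 𝒞, 12 * v * torusDiam C ≤ C.ncard * D₀

lemma IsAdmissible.six_mul_torusDiam_lt (h : IsAdmissible v D₀ 𝒞 A) (hD₀ : 0 < D₀)
    {C : Set (Fin d → ZMod n)} (hC : C ∈ 𝒞) (hsmall : C.ncard < 2 * v) :
    6 * torusDiam C < D₀ := by
  have : 12 * v * torusDiam C < 2 * v * D₀ :=
    (h.diam_le C hC).trans_lt (Nat.mul_lt_mul_of_pos_right hsmall hD₀)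
  exact Nat.lt_of_mul_lt_mul_left (a := 2 * v) (by linarith)

lemma IsAdmissible.of_isMergeStep {𝒞₂ : Set (Set (Fin d → ZMod n))} {A₂ : Set (Fin d → ZMod n)}
    (h : IsAdmissible v D₀ 𝒞 A) (h₁ : IsMergeStep D₀ 𝒞 𝒞₁) (h₂ : IsMergeStep D₀ 𝒞₁ 𝒞₂)
    (hpart : IsPartitionOf 𝒞₂ A₂) (hcard : ∀ C ∈ 𝒞₂, 2 * v ≤ C.ncard) :
    IsAdmissible (2 * v) (36 * D₀) 𝒞₂ A₂ where
  isPartitionOf := hpart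
  le_ncard := hcard
  diam_le C hC := by
    have hv := hcard C hC
    by_cases hold : C ∈ 𝒞₁ ∧ C ∈ 𝒞
    · have := h.diam_le C hold.2
      nlinarith
    · have hdiam : torusDiam C ≤ D₀ := by
        by_cases hC₁ : C ∈ 𝒞₁
        · exact (h₁ C hC₁ fun hC𝒞 => hold ⟨hC₁, hC𝒞⟩).1
        · exact (h₂ C hC hC₁).1
      calc 12 * (2 * v) * torusDiam C ≤ 12 * (C.ncard * D₀) := by
            rw [mul_assoc]; exact Nat.mul_le_mul_left _ (Nat.mul_le_mul hv hdiam)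
        _ ≤ C.ncard * (36 * D₀) := by ring_nf; omega

variable [NeZero n]

lemma IsAdmissible.two_mul_le_ncard (h : IsAdmissible v D₀ 𝒞 A) {C₁ C₂ : Set (Fin d → ZMod n)}
    (hC₁ : C₁ ∈ 𝒞) (hC₂ : C₂ ∈ 𝒞) (hne : C₁ ≠ C₂) : 2 * v ≤ A.ncard := by
  have := Set.ncard_le_ncard (Set.union_subset (h.isPartitionOf.subset hC₁)
    (h.isPartitionOf.subset hC₂))
  rw [h.isPartitionOf.ncard_union hC₁ hC₂ hne] at this
  linarith [h.le_ncard C₁ hC₁, h.le_ncard C₂ hC₂]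

lemma IsAdmissible.exists_pairing (h : IsAdmissible v D₀ 𝒞 A) :
    ∃ 𝒞₁, IsPartitionOf 𝒞₁ A ∧ (∀ C ∈ 𝒞₁, v ≤ C.ncard) ∧ IsMergeStep D₀ 𝒞 𝒞₁ ∧
      (∀ C ∈ 𝒞₁, C.ncard < 2 * v → C ∈ 𝒞) ∧
      (∀ C ∈ 𝒞₁, ∀ C' ∈ 𝒞₁, C ≠ C' → C.ncard < 2 * v → C'.ncard < 2 * v →
        D₀ < torusDiam (C ∪ C')) := by
  have hsum : ∀ C₀ ∈ 𝒞, ∀ C₁ ∈ 𝒞, C₀ ≠ C₁ → 2 * v ≤ (C₀ ∪ C₁).ncard := fun C₀ h₀ C₁ h₁ hne => by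
    rw [h.isPartitionOf.ncard_union h₀ h₁ hne]
    linarith [h.le_ncard C₀ h₀, h.le_ncard C₁ h₁]
  obtain ⟨𝒞₁, hpart, hmerge, hfar⟩ := h.isPartitionOf.exists_pairing
    (fun C => C.ncard < 2 * v) (fun C C' => torusDiam (C ∪ C') ≤ D₀)
    fun C₀ h₀ C₁ h₁ hne _ _ => (hsum C₀ h₀ C₁ h₁ hne).not_gt
  refine ⟨𝒞₁, hpart, fun C hC => ?_, fun C hC hC𝒞 => ?_, fun C hC hsmall => ?_,
    fun C hC C' hC' hne hs hs' => not_le.mp (hfar C hC C' hC' hne hs hs')⟩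
  · by_cases hC𝒞 : C ∈ 𝒞
    · exact h.le_ncard C hC𝒞
    · obtain ⟨C₀, h₀, C₁, h₁, hne, -, -, -, rfl⟩ := hmerge C hC hC𝒞
      linarith [hsum C₀ h₀ C₁ h₁ hne, h.le_ncard C₀ h₀]
  · obtain ⟨C₀, h₀, C₁, h₁, -, -, -, hdiam, rfl⟩ := hmerge C hC hC𝒞
    exact ⟨hdiam, C₀, h₀, C₁, h₁, rfl⟩
  · by_contra hC𝒞
    obtain ⟨C₀, h₀, C₁, h₁, hne, -, -, -, rfl⟩ := hmerge C hC hC𝒞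
    exact (hsum C₀ h₀ C₁ h₁ hne).not_gt hsmall

lemma ncard_le_of_pairwise_far (s : ℕ) {𝒮 : Set (Set (Fin d → ZMod n))}
    (hne : ∀ C ∈ 𝒮, C.Nonempty)
    (hfar : 𝒮.Pairwise fun C C' => ∀ x ∈ C, ∀ y ∈ C', s < torusDist x y) :
    𝒮.ncard ≤ ((n + s) / (s + 1)) ^ d := by
  choose! rep hrep using hne
  have hinj : Set.InjOn rep 𝒮 := fun C hC C' hC' heq => by
    by_contra hCC'
    have := hfar hC hC' hCC' _ (hrep C hC) _ (hrep C' hC')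
    rw [heq, torusDist_self] at this
    exact Nat.not_lt_zero _ this
  rw [← hinj.ncard_image]
  refine ncard_le_of_pairwise_lt_torusDist s ?_
  rintro _ ⟨C, hC, rfl⟩ _ ⟨C', hC', rfl⟩ hne
  exact hfar hC hC' (fun h => hne (h ▸ rfl)) _ (hrep C hC) _ (hrep C' hC')

lemma cast_ceil_div_le {n D₀ : ℕ} (hD₀ : 0 < D₀) (h : D₀ ≤ n) :
    (((n + D₀ / 5) / (D₀ / 5 + 1) : ℕ) : ℝ) ≤ 6 * n / D₀ := by
  rw [le_div_iff₀ (by exact_mod_cast hD₀)]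
  have hq := Nat.div_mul_le_self (n + D₀ / 5) (D₀ / 5 + 1)
  have hD : D₀ ≤ 5 * (D₀ / 5 + 1) := by omega
  have : (n + D₀ / 5) / (D₀ / 5 + 1) * D₀ ≤ 6 * n :=
    calc (n + D₀ / 5) / (D₀ / 5 + 1) * D₀
        ≤ (n + D₀ / 5) / (D₀ / 5 + 1) * (5 * (D₀ / 5 + 1)) := Nat.mul_le_mul_left _ hD
      _ ≤ 5 * (n + D₀ / 5) := by linarith
      _ ≤ 6 * n := by omega
  exact_mod_cast this

lemma exists_discard_small (hD₀ : 0 < D₀) (hD₀n : D₀ < n) (h𝒞₁ : IsPartitionOf 𝒞₁ A)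
    (hsmall : ∀ C ∈ 𝒞₁, C.ncard < 2 * v → 6 * torusDiam C < D₀)
    (hfar : ∀ C ∈ 𝒞₁, ∀ C' ∈ 𝒞₁, C ≠ C' → C.ncard < 2 * v → C'.ncard < 2 * v →
        D₀ < torusDiam (C ∪ C')) :
    ∃ 𝒞₂ ⊆ 𝒞₁, (∀ C ∈ 𝒞₂, 2 * v ≤ C.ncard) ∧
      (A.ncard : ℝ) ≤ (⋃₀ 𝒞₂).ncard + 2 * v * (6 * n / D₀) ^ d := by
  set 𝒮 := {C ∈ 𝒞₁ | C.ncard < 2 * v}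
  set 𝒞₂ := {C ∈ 𝒞₁ | 2 * v ≤ C.ncard}
  have hA : A = ⋃₀ 𝒞₂ ∪ ⋃₀ 𝒮 := by
    rw [← Set.sUnion_union, ← h𝒞₁.2.1]
    congr 1
    ext C
    simp only [Set.mem_union, Set.mem_ofPred_eq, 𝒞₂, 𝒮]
    constructor
    · intro hC; exact (le_or_gt (2 * v) C.ncard).imp (⟨hC, ·⟩) (⟨hC, ·⟩)
    · rintro (⟨hC, -⟩ | ⟨hC, -⟩) <;> exact hC
  have hcount : (𝒮.ncard : ℝ) ≤ (6 * n / D₀) ^ d := by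
    have := ncard_le_of_pairwise_far (𝒮 := 𝒮) (D₀ / 5) (fun C hC => h𝒞₁.1 C hC.1)
      fun C hC C' hC' hne x hx y hy => by
        have := torusDiam_union_le hx hy
        have := hsmall C hC.1 hC.2
        have := hsmall C' hC'.1 hC'.2
        have := hfar C hC.1 C' hC'.1 hne hC.2 hC'.2
        omega
    calc (𝒮.ncard : ℝ) ≤ (((n + D₀ / 5) / (D₀ / 5 + 1) : ℕ) : ℝ) ^ d := by exact_mod_cast this
      _ ≤ _ := pow_le_pow_left₀ (Nat.cast_nonneg _) (cast_ceil_div_le hD₀ hD₀n.le) d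
  have hloss : (⋃₀ 𝒮).ncard ≤ 𝒮.ncard * (2 * v) := ncard_sUnion_le fun C hC => hC.2.le
  refine ⟨𝒞₂, fun C hC => hC.1, fun C hC => hC.2, ?_⟩
  calc (A.ncard : ℝ) ≤ (⋃₀ 𝒞₂).ncard + (⋃₀ 𝒮).ncard := by
        rw [hA]; exact_mod_cast Set.ncard_union_le _ _
    _ ≤ (⋃₀ 𝒞₂).ncard + 𝒮.ncard * (2 * v) := by exact_mod_cast Nat.add_le_add_left hloss _
    _ ≤ _ := by nlinarith

lemma exists_absorb_small (hnD₀ : n ≤ D₀) (h𝒞₁ : IsPartitionOf 𝒞₁ A)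
    (hle : ∀ C ∈ 𝒞₁, v ≤ C.ncard) (hA : 2 * v ≤ A.ncard)
    (hfar : ∀ C ∈ 𝒞₁, ∀ C' ∈ 𝒞₁, C ≠ C' → C.ncard < 2 * v → C'.ncard < 2 * v →
        D₀ < torusDiam (C ∪ C')) :
    ∃ 𝒞₂, IsPartitionOf 𝒞₂ A ∧ (∀ C ∈ 𝒞₂, 2 * v ≤ C.ncard) ∧ IsMergeStep D₀ 𝒞₁ 𝒞₂ := by
  have hunique : ∀ C ∈ 𝒞₁, ∀ C' ∈ 𝒞₁, C.ncard < 2 * v → C'.ncard < 2 * v → C = C' :=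
    fun C hC C' hC' hs hs' => by
      by_contra hne
      have := hfar C hC C' hC' hne hs hs'
      have := torusDiam_lt (C ∪ C')
      omega
  by_cases hu : ∃ u ∈ 𝒞₁, u.ncard < 2 * v
  · obtain ⟨u, hu, husmall⟩ := hu
    obtain ⟨P, hP, hPu⟩ : ∃ P ∈ 𝒞₁, P ≠ u := by
      by_contra! hall
      have hAu : A ⊆ u := h𝒞₁.2.1 ▸ Set.sUnion_subset fun P hP => (hall P hP).le
      linarith [Set.ncard_le_ncard hAu]
    refine ⟨insert (u ∪ P) (𝒞₁ \ {u, P}), h𝒞₁.merge hu hP, ?_, ?_⟩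
    · rintro C (rfl | ⟨hC, hCuP⟩)
      · rw [h𝒞₁.ncard_union hu hP hPu.symm]
        linarith [hle u hu, hle P hP]
      · by_contra hlt
        exact hCuP (Or.inl (hunique C hC u hu (not_le.mp hlt) husmall))
    · rintro C (rfl | ⟨hC, -⟩) hC₁
      exacts [⟨(torusDiam_lt _).le.trans hnD₀, u, hu, P, hP, rfl⟩, absurd hC hC₁]
  · push Not at hu
    exact ⟨𝒞₁, h𝒞₁, hu, fun C hC hC₁ => absurd hC hC₁⟩

lemma IsAdmissible.exists_round (h : IsAdmissible v D₀ 𝒞 A) (hD₀ : 0 < D₀)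
    (hA : 2 * v ≤ A.ncard) :
    ∃ 𝒞₁ 𝒞₂ A₂, IsPartitionOf 𝒞₁ A ∧ (∀ C ∈ 𝒞₁, v ≤ C.ncard) ∧ IsMergeStep D₀ 𝒞 𝒞₁ ∧
      IsMergeStep D₀ 𝒞₁ 𝒞₂ ∧ A₂ ⊆ A ∧ IsAdmissible (2 * v) (36 * D₀) 𝒞₂ A₂ ∧
      (A.ncard : ℝ) ≤ A₂.ncard + 2 * v * (6 * n / D₀) ^ d := by
  obtain ⟨𝒞₁, h𝒞₁, hle, hmerge₁, hold, hfar⟩ := h.exists_pairing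
  obtain ⟨𝒞₂, A₂, hA₂, h𝒞₂, hcard, hmerge₂, hloss⟩ : ∃ 𝒞₂ A₂, A₂ ⊆ A ∧
      IsPartitionOf 𝒞₂ A₂ ∧ (∀ C ∈ 𝒞₂, 2 * v ≤ C.ncard) ∧ IsMergeStep D₀ 𝒞₁ 𝒞₂ ∧
      (A.ncard : ℝ) ≤ A₂.ncard + 2 * v * (6 * n / D₀) ^ d := by
    rcases lt_or_ge D₀ n with hD₀n | hnD₀
    · obtain ⟨𝒞₂, hsub, hcard, hloss⟩ := exists_discard_small hD₀ hD₀n h𝒞₁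
        (fun C hC hs => h.six_mul_torusDiam_lt hD₀ (hold C hC hs) hs) hfar
      exact ⟨𝒞₂, ⋃₀ 𝒞₂, h𝒞₁.2.1 ▸ Set.sUnion_mono hsub, h𝒞₁.of_subset hsub, hcard,
        fun C hC hC₁ => absurd (hsub hC) hC₁, hloss⟩
    · obtain ⟨𝒞₂, h𝒞₂, hcard, hmerge⟩ := exists_absorb_small hnD₀ h𝒞₁ hle hA hfar
      refine ⟨𝒞₂, A, subset_rfl, h𝒞₂, hcard, hmerge, ?_⟩
      have : (0 : ℝ) ≤ 2 * v * (6 * n / D₀) ^ d := by positivity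
      linarith
  exact ⟨𝒞₁, 𝒞₂, A₂, h𝒞₁, hle, hmerge₁, hmerge₂, hA₂,
    h.of_isMergeStep hmerge₁ hmerge₂ h𝒞₂ hcard, hloss⟩

end Rounds

section Hierarchy

variable {d n v : ℕ} {A : Set (Fin d → ZMod n)}

def DormitoryHierarchy.const (D : ℕ → ℕ) {C : Set (Fin d → ZMod n)} (hCA : C ⊆ A)
    (hC : C.Nonempty) (hv : v ≤ C.ncard) : DormitoryHierarchy d n v D A where
  J := 0
  level _ := C
  part _ := {C}
  level_zero_subset := hCA
  level_antitone _ hj := absurd hj (by omega)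
  part_isPartition _ _ := ⟨by simpa using hC, by simp, by simp⟩
  card_ge j hj C' hC' := by
    obtain rfl : j = 0 := by omega
    obtain rfl : C' = C := hC'
    simpa using hv
  merge _ hj := absurd hj (by omega)
  final := ⟨C, rfl⟩

/-- Prepends the two levels of a round to a hierarchy for the rescaled parameters
`(2 v, 36 D₀)`: since `⌊(j + 2) / 2⌋ = ⌊j / 2⌋ + 1` and `6 ^ (j + 2) = 36 · 6 ^ j`,
its levels are valid levels `j + 2` of a `(v, 6 ^ · D₀)`-hierarchy. -/
def DormitoryHierarchy.cons₂ {D₀ : ℕ} {A₀ : Set (Fin d → ZMod n)}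
    {𝒞₀ 𝒞₁ : Set (Set (Fin d → ZMod n))}
    (H : DormitoryHierarchy d n (2 * v) (fun j => 6 ^ j * (36 * D₀)) A)
    (hA₀ : A₀ ⊆ A) (hsub : H.level 0 ⊆ A₀)
    (h𝒞₀ : IsPartitionOf 𝒞₀ A₀) (h𝒞₁ : IsPartitionOf 𝒞₁ A₀)
    (hcard₀ : ∀ C ∈ 𝒞₀, v ≤ C.ncard) (hcard₁ : ∀ C ∈ 𝒞₁, v ≤ C.ncard)
    (hmerge₀ : IsMergeStep D₀ 𝒞₀ 𝒞₁) (hmerge₁ : IsMergeStep D₀ 𝒞₁ (H.part 0)) :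
    DormitoryHierarchy d n v (fun j => 6 ^ j * D₀) A where
  J := H.J + 2
  level
    | 0 | 1 => A₀
    | j + 2 => H.level j
  part
    | 0 => 𝒞₀
    | 1 => 𝒞₁
    | j + 2 => H.part j
  level_zero_subset := hA₀
  level_antitone
    | 0, _ => subset_rfl
    | 1, _ => hsub
    | j + 2, hj => H.level_antitone j (by omega)
  part_isPartition
    | 0, _ => h𝒞₀
    | 1, _ => h𝒞₁
    | j + 2, hj => H.part_isPartition j (by omega)
  card_ge
    | 0, _ => by simpa using hcard₀
    | 1, _ => by simpa using hcard₁
    | j + 2, hj => fun C hC => by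
        rw [show (j + 2) / 2 = j / 2 + 1 by omega, pow_succ, mul_assoc]
        exact H.card_ge j (by omega) C hC
  merge
    | 0, _ => by simpa [IsMergeStep] using hmerge₀
    | 1, _ => hmerge₁.mono (by omega)
    | j + 2, hj => by
        simpa only [show 6 ^ (j + 2) * D₀ = 6 ^ j * (36 * D₀) by ring]
          using H.merge j (by omega)
  final := H.final

end Hierarchy

lemma div_thirtysix_pow_le {d : ℕ} {B : ℝ} (hB : 0 ≤ B) (hd : 1 ≤ d) :
    (B / 36) ^ d ≤ B ^ d / 36 := by
  rw [div_pow]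
  exact div_le_div_of_nonneg_left (pow_nonneg hB d) (by norm_num) (le_self_pow₀ (by norm_num)
    (by omega))

theorem exists_dormitoryHierarchy_of_isAdmissible {d n : ℕ} [NeZero n] (hd : 1 ≤ d)
    {A : Set (Fin d → ZMod n)} (k : ℕ) {v D₀ : ℕ} {A₀ : Set (Fin d → ZMod n)}
    {𝒞₀ : Set (Set (Fin d → ZMod n))} (hv : 0 < v) (hD₀ : 0 < D₀) (hA₀A : A₀ ⊆ A)
    (h𝒞₀ : IsAdmissible v D₀ 𝒞₀ A₀)
    (hcard : 8 * (v : ℝ) * (6 * (n : ℝ) / (D₀ : ℝ)) ^ d ≤ (A₀.ncard : ℝ))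
    (hk : A₀.ncard < 2 ^ k * v) :
    ∃ H : DormitoryHierarchy d n v (fun j => 6 ^ j * D₀) A, H.level 0 = A₀ ∧ H.part 0 = 𝒞₀ ∧
      (A₀.ncard : ℝ) - 4 * (v : ℝ) * (6 * (n : ℝ) / (D₀ : ℝ)) ^ d
        ≤ ((H.level H.J).ncard : ℝ) := by
  induction k using Nat.strong_induction_on generalizing v D₀ A₀ 𝒞₀ with
  | _ k ih =>
  set B : ℝ := 6 * (n : ℝ) / (D₀ : ℝ)
  have hB : 0 < B := by have := Nat.pos_of_neZero n; positivity
  have hvB : 0 < (v : ℝ) * B ^ d := by positivity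
  have hA₀ : A₀.Nonempty := Set.nonempty_of_ncard_ne_zero fun h0 => by
    rw [h0] at hcard; push_cast at hcard; nlinarith
  obtain ⟨C, hC⟩ := Set.Nonempty.of_sUnion (h𝒞₀.isPartitionOf.2.1 ▸ hA₀)
  by_cases hsingle : 𝒞₀.Subsingleton
  · obtain rfl := hsingle.eq_singleton_of_mem hC
    obtain rfl : A₀ = C := by simpa using h𝒞₀.isPartitionOf.2.1.symm
    refine ⟨.const _ hA₀A hA₀ (h𝒞₀.le_ncard _ rfl), rfl, rfl, ?_⟩
    simp only [DormitoryHierarchy.const]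
    linarith
  obtain ⟨C₁, hC₁, C₂, hC₂, hne⟩ := Set.not_subsingleton_iff.mp hsingle
  have h2v := h𝒞₀.two_mul_le_ncard hC₁ hC₂ hne
  rcases k with _ | k
  · rw [pow_zero, one_mul] at hk
    omega
  obtain ⟨𝒞₁, 𝒞₂, A₂, h𝒞₁, hcard₁, hmerge₀, hmerge₁, hA₂, h𝒞₂, hloss⟩ :=
    h𝒞₀.exists_round hD₀ h2v
  have hB' : 6 * (n : ℝ) / ((36 * D₀ : ℕ) : ℝ) = B / 36 := by
    push_cast; rw [mul_comm 36, ← div_div]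
  have hsmall : 8 * ((2 * v : ℕ) : ℝ) * (B / 36) ^ d ≤ 2 * v * B ^ d := by
    have := div_thirtysix_pow_le hB.le hd
    push_cast
    nlinarith
  obtain ⟨H, hH0, hHp, hH⟩ := ih k (lt_add_one k) (by omega) (by omega) (hA₂.trans hA₀A) h𝒞₂
    (by rw [hB']; linarith) ((Set.ncard_le_ncard hA₂).trans_lt (by rw [pow_succ] at hk; linarith))
  refine ⟨H.cons₂ hA₀A (hH0 ▸ hA₂) h𝒞₀.isPartitionOf h𝒞₁ h𝒞₀.le_ncard hcard₁ hmerge₀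
    (hHp ▸ hmerge₁), rfl, rfl, ?_⟩
  rw [hB'] at hH
  exact (by linarith : _ ≤ _).trans hH

lemma isAdmissible_of_torusRConnected {d n v D₀ : ℕ} [NeZero n] {A : Set (Fin d → ZMod n)}
    {𝒞 : Set (Set (Fin d → ZMod n))} (h : IsPartitionOf 𝒞 A)
    (hconn : ∀ C ∈ 𝒞, torusRConnected (D₀ / (12 * v)) C) (hcard : ∀ C ∈ 𝒞, v ≤ C.ncard) :
    IsAdmissible v D₀ 𝒞 A where
  isPartitionOf := h
  le_ncard := hcard
  diam_le C hC := by
    have hdiam : torusDiam C ≤ C.ncard * (D₀ / (12 * v)) :=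
      torusDiam_le fun x hx y hy => (torusDist_le_of_torusRConnected (hconn C hC) hx hy).trans
        (Nat.mul_le_mul_right _ (Nat.sub_le _ _))
    calc 12 * v * torusDiam C = torusDiam C * (12 * v) := mul_comm _ _
      _ ≤ C.ncard * (D₀ / (12 * v)) * (12 * v) := Nat.mul_le_mul_right _ hdiam
      _ = C.ncard * (D₀ / (12 * v) * (12 * v)) := mul_assoc _ _ _
      _ ≤ C.ncard * D₀ := Nat.mul_le_mul_left _ (Nat.div_mul_le_self _ _)

/-- **Completing a zeroth level into a full dormitory hierarchy.**
Let `d, n, v, D₀ ≥ 1`, let `D j = 6^j D₀`, and let `A ⊆ (ℤ/nℤ)^d`.  Assume `A₀ ⊆ A`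
satisfies `|A₀| ≥ 8 v (6n/D₀)^d`, and that `𝒞₀` is a partition of `A₀` whose clusters
are `⌊D₀/(12v)⌋`-connected and of cardinality at least `v`.  Then `(A₀, 𝒞₀)` can be
completed into a `(v, D)`-dormitory hierarchy `(A_j, 𝒞_j)_{j ≤ J}` on `A` with
`|A_J| ≥ |A₀| − 4 v (6n/D₀)^d`. -/
theorem complete_dormitory_hierarchy
    (d n v D₀ : ℕ) (hd : 1 ≤ d) (hn : 1 ≤ n) (hv : 1 ≤ v) (hD₀ : 1 ≤ D₀)
    (D : ℕ → ℕ) (hD : ∀ j, D j = 6 ^ j * D₀)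
    (A A₀ : Set (Fin d → ZMod n)) (hA₀A : A₀ ⊆ A)
    (hcard : 8 * (v : ℝ) * (6 * (n : ℝ) / (D₀ : ℝ)) ^ d ≤ (A₀.ncard : ℝ))
    (𝒞₀ : Set (Set (Fin d → ZMod n))) (hpart : IsPartitionOf 𝒞₀ A₀)
    (hconn : ∀ C ∈ 𝒞₀, torusRConnected (D₀ / (12 * v)) C)
    (hcardC : ∀ C ∈ 𝒞₀, v ≤ C.ncard) :
    ∃ H : DormitoryHierarchy d n v D A, H.level 0 = A₀ ∧ H.part 0 = 𝒞₀ ∧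
      (A₀.ncard : ℝ) - 4 * (v : ℝ) * (6 * (n : ℝ) / (D₀ : ℝ)) ^ d
        ≤ ((H.level H.J).ncard : ℝ) := by
  obtain rfl : D = fun j => 6 ^ j * D₀ := funext hD
  have : NeZero n := ⟨by omega⟩
  exact exists_dormitoryHierarchy_of_isAdmissible hd A₀.ncard hv hD₀ hA₀A
    (isAdmissible_of_torusRConnected hpart hconn hcardC) hcard
    (Nat.lt_two_pow_self.trans_le (Nat.le_mul_of_pos_right _ hv))
end

section
/- Let a, b ∈ (0,1). Let N be a random variable with values in the positive integers which stochastically dominates a geometric random variable with parameter a, and let (X_n)_{n≥1} be i.i.d. geometric random variables with parameter b, independent of N. Then the random variable S = 1 + Σ_{n=1}^{N} (X_n − 1) stochastically dominates a geometric random variable with parameter ab/(1 − b + ab). -/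
open MeasureTheory ProbabilityTheory Finset
open scoped ENNReal

/-!
Let `T m` be the sum of `m` of the shifted variables `X n - 1`, which are independent and
geometric on `ℕ` with parameter `b`, so that `T m` is negative binomial. Conditioning on `N`,
`P(S ≥ k) = ∑ₘ P(N = m) P(T m ≥ k - 1)`. Since `m ↦ P(T m ≥ k - 1)` is nondecreasing, Abel
summation shows that this sum can only decrease when the law of `N` is replaced by the geometric
law of parameter `a`, which `N` dominates. For that law the sum is computed exactly: a geometric
number of independent geometric variables is again geometric, here with parameter
`a b / (1 - b + a b)`, by the negative binomial series `∑ᵢ C(i + j, j) xⁱ = (1 - x)^-(j + 1)`.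
-/

theorem add_sum_range_tsub_of_monotone {M : Type*} [AddCommMonoid M] [PartialOrder M]
    [CanonicallyOrderedAdd M] [Sub M] [OrderedSub M] {f : ℕ → M} (hf : Monotone f) (m : ℕ) :
    f 0 + ∑ j ∈ range m, (f (j + 1) - f j) = f m := by
  induction m with
  | zero => simp
  | succ m ih => rw [sum_range_succ, ← add_assoc, ih, add_tsub_cancel_of_le (hf m.le_succ)]

theorem tsum_mul_eq_add_tsum_tail_mul {w f : ℕ → ℝ≥0∞} (hf : Monotone f) :
    ∑' m, w m * f m =
      f 0 * ∑' m, w m + ∑' j, (f (j + 1) - f j) * ∑' i, w (i + (j + 1)) := by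
  have htail : ∀ j, ∑' m, (if j < m then w m else 0) = ∑' i, w (i + (j + 1)) := fun j =>
    ((add_left_injective (j + 1)).tsum_eq (f := fun m => if j < m then w m else 0)
      fun m hm => ⟨m - (j + 1), Nat.sub_add_cancel (not_not.1 fun h => hm (if_neg h))⟩).symm.trans
      (tsum_congr fun i => if_pos (by omega))
  calc ∑' m, w m * f m
      = ∑' m, (w m * f 0 + ∑' j, if j < m then (f (j + 1) - f j) * w m else 0) := by
        refine tsum_congr fun m => ?_
        rw [← add_sum_range_tsub_of_monotone hf m, mul_add, mul_sum,
          tsum_eq_sum (s := range m) (fun j hj => if_neg (by simpa using hj))]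
        congr 1
        exact sum_congr rfl fun j hj => by rw [if_pos (mem_range.1 hj), mul_comm]
    _ = f 0 * ∑' m, w m + ∑' j, (f (j + 1) - f j) * ∑' i, w (i + (j + 1)) := by
        rw [ENNReal.tsum_add, ENNReal.tsum_mul_right, mul_comm, ENNReal.tsum_comm]
        congr 1
        refine tsum_congr fun j => ?_
        rw [← htail, ← ENNReal.tsum_mul_left]
        exact tsum_congr fun m => by split_ifs <;> simp

theorem tsum_mul_le_tsum_mul_of_tail_le {p w f : ℕ → ℝ≥0∞} (hf : Monotone f)
    (htail : ∀ j, ∑' i, w (i + j) ≤ ∑' i, p (i + j)) :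
    ∑' m, w m * f m ≤ ∑' m, p m * f m := by
  rw [tsum_mul_eq_add_tsum_tail_mul hf, tsum_mul_eq_add_tsum_tail_mul hf]
  exact add_le_add (mul_le_mul_of_nonneg_left (by simpa using htail 0) zero_le)
    (ENNReal.tsum_le_tsum fun j => mul_le_mul_of_nonneg_left (htail (j + 1)) zero_le)

theorem tsum_ofReal_mul_geometric_tail {c : ℝ} (hc₀ : 0 < c) (hc₁ : c ≤ 1) (j : ℕ) :
    ∑' i, ENNReal.ofReal (c * (1 - c) ^ (i + j)) = ENNReal.ofReal ((1 - c) ^ j) := by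
  have hq : 0 ≤ 1 - c := by linarith
  have hgeom : HasSum (fun i => c * (1 - c) ^ (i + j)) ((1 - c) ^ j) := by
    have h := (hasSum_geometric_of_lt_one hq (by linarith)).mul_left (c * (1 - c) ^ j)
    rw [sub_sub_cancel, mul_right_comm, mul_inv_cancel₀ hc₀.ne', one_mul] at h
    exact h.congr_fun fun i => by ring
  rw [← ENNReal.ofReal_tsum_of_nonneg (fun i => by positivity) hgeom.summable, hgeom.tsum_eq]

def posGeometricMass (a : ℝ) : ℕ → ℝ≥0∞
  | 0 => 0
  | i + 1 => ENNReal.ofReal (a * (1 - a) ^ i)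

theorem tsum_posGeometricMass_tail {a : ℝ} (ha₀ : 0 < a) (ha₁ : a ≤ 1) (j : ℕ) :
    ∑' i, posGeometricMass a (i + j) = ENNReal.ofReal ((1 - a) ^ (j - 1)) := by
  cases j with
  | zero =>
    rw [tsum_eq_zero_add' ENNReal.summable]
    simpa [posGeometricMass] using tsum_ofReal_mul_geometric_tail ha₀ ha₁ 0
  | succ j => simpa [posGeometricMass, ← add_assoc] using tsum_ofReal_mul_geometric_tail ha₀ ha₁ j

theorem hasSum_geometric_mul_negBinomial {a b : ℝ} (hab : |(1 - a) * b| < 1) (j : ℕ) :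
    HasSum (fun i : ℕ => a * (1 - a) ^ i * ((i + 1).multichoose j * b ^ (i + 1) * (1 - b) ^ j))
      (a * b / (1 - b + a * b) * (1 - a * b / (1 - b + a * b)) ^ j) := by
  have hD : 1 - b + a * b ≠ 0 := fun h => by linarith [(abs_lt.1 hab).2]
  have hq : 1 - a * b / (1 - b + a * b) = (1 - b) / (1 - b + a * b) := by
    field_simp
    ring
  have h := (hasSum_choose_mul_geometric_of_norm_lt_one j hab).mul_left (a * b * (1 - b) ^ j)
  rw [show 1 - (1 - a) * b = 1 - b + a * b by ring] at h
  rw [show a * b * (1 - b) ^ j * (1 / (1 - b + a * b) ^ (j + 1))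
      = a * b / (1 - b + a * b) * (1 - a * b / (1 - b + a * b)) ^ j by
    rw [hq, div_pow, pow_succ]; field_simp] at h
  refine h.congr_fun fun i => ?_
  rw [Nat.multichoose_eq, show i + 1 + j - 1 = i + j by omega, mul_pow]
  ring

section NatValued

variable {Ω : Type*} [MeasurableSpace Ω] {μ : Measure Ω}

theorem measure_le_eq_tsum {N : Ω → ℕ} (hN : Measurable N) (j : ℕ) :
    μ {ω | j ≤ N ω} = ∑' i, μ {ω | N ω = i + j} := by
  have hunion : {ω | j ≤ N ω} = ⋃ i, {ω | N ω = i + j} := by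
    ext ω
    simp only [Set.mem_ofPred_eq, Set.mem_iUnion]
    exact ⟨fun h => ⟨N ω - j, by omega⟩, fun ⟨i, hi⟩ => by omega⟩
  have hdisj : Pairwise (Function.onFun Disjoint fun i => {ω | N ω = i + j}) :=
    fun i i' hii' => Set.disjoint_left.2 fun ω (hi : N ω = i + j) (hi' : N ω = i' + j) =>
      hii' (by omega)
  rw [hunion, measure_iUnion hdisj fun i => hN (measurableSet_singleton (i + j))]

theorem measure_sub_one_eq [IsProbabilityMeasure μ] {X : Ω → ℕ} (hX : Measurable X)
    {p : ℕ → ℝ≥0∞} (hp : ∀ k, μ {ω | X ω = k + 1} = p k) (hp_one : ∑' k, p k = 1) (j : ℕ) :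
    μ {ω | X ω - 1 = j} = p j := by
  have hzero : μ {ω | X ω = 0} = 0 := by
    have htotal := measure_le_eq_tsum (μ := μ) hX 0
    simp only [zero_le, Set.ofPred_true, measure_univ, add_zero] at htotal
    rw [tsum_eq_zero_add' ENNReal.summable] at htotal
    simp only [hp, hp_one] at htotal
    exact (ENNReal.add_left_inj ENNReal.one_ne_top).1 (htotal.symm.trans (zero_add 1).symm)
  rw [← hp j]
  refine measure_congr ((measure_eq_zero_iff_ae_notMem.1 hzero).mono fun ω hω => ?_)
  simp only [Set.mem_ofPred_eq] at hω
  change (X ω - 1 = j) = (X ω = j + 1)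
  exact propext (by omega)

theorem measure_add_eq_sum_antidiagonal {U V : Ω → ℕ} (hU : Measurable U) (hV : Measurable V)
    (hUV : IndepFun U V μ) (j : ℕ) :
    μ {ω | U ω + V ω = j} = ∑ p ∈ antidiagonal j, μ {ω | U ω = p.1} * μ {ω | V ω = p.2} := by
  have hunion : {ω | U ω + V ω = j} = ⋃ p ∈ antidiagonal j, U ⁻¹' {p.1} ∩ V ⁻¹' {p.2} := by
    ext ω
    simp
  rw [hunion, measure_biUnion_finset (fun p _ p' _ hpp' => Set.disjoint_left.2 fun ω hp hp' =>
      hpp' ?_) (fun p _ => (hU (measurableSet_singleton _)).inter (hV (measurableSet_singleton _)))]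
  · exact sum_congr rfl fun p _ => hUV.measure_inter_preimage_eq_mul _ _
      (measurableSet_singleton _) (measurableSet_singleton _)
  · simp only [Set.mem_inter_iff, Set.mem_preimage, Set.mem_singleton_iff] at hp hp'
    exact Prod.ext (hp.1 ▸ hp'.1) (hp.2 ▸ hp'.2)

theorem Nat.sum_range_succ_multichoose (n j : ℕ) :
    ∑ l ∈ range (j + 1), n.multichoose l = (n + 1).multichoose j := by
  rw [Nat.sum_range_multichoose, Nat.multichoose_eq, show n + 1 + j - 1 = j + n by omega,
    Nat.choose_symm_add]

theorem measure_sum_eq_negBinomial [IsProbabilityMeasure μ] {ι : Type*} {Y : ι → Ω → ℕ}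
    (hY : iIndepFun Y μ) (hY_meas : ∀ n, Measurable (Y n)) {b : ℝ} (hb₀ : 0 ≤ b) (hb₁ : b ≤ 1)
    (hlaw : ∀ n j, μ {ω | Y n ω = j} = ENNReal.ofReal (b * (1 - b) ^ j)) (s : Finset ι) (j : ℕ) :
    μ {ω | ∑ n ∈ s, Y n ω = j} = ENNReal.ofReal ((#s).multichoose j * b ^ #s * (1 - b) ^ j) := by
  classical
  have h1b : 0 ≤ 1 - b := sub_nonneg.2 hb₁
  induction s using Finset.induction_on generalizing j with
  | empty => cases j <;> simp
  | insert n s hn ih =>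
    have hindep : IndepFun (fun ω => ∑ i ∈ s, Y i ω) (Y n) μ := by
      simpa [Finset.sum_fn] using hY.indepFun_finsetSum_of_notMem hY_meas hn
    simp only [sum_insert hn, card_insert_of_notMem hn, add_comm (Y n _)]
    rw [measure_add_eq_sum_antidiagonal (by fun_prop) (hY_meas n) hindep,
      ← Nat.sum_range_succ_multichoose, Nat.cast_sum, sum_mul, sum_mul,
      ENNReal.ofReal_sum_of_nonneg (fun _ _ => by positivity),
      Nat.sum_antidiagonal_eq_sum_range_succ_mk]
    refine sum_congr rfl fun l hl => ?_
    rw [ih, hlaw, ← ENNReal.ofReal_mul (by positivity)]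
    congr 1
    rw [← pow_mul_pow_sub (1 - b) (Nat.lt_succ_iff.1 (mem_range.1 hl))]
    ring

theorem measure_randomIndex_mem {β : Type*} [MeasurableSpace β] {N : Ω → ℕ} {T : ℕ → Ω → β}
    (hN : Measurable N) (hT : ∀ m, Measurable (T m)) (hindep : ∀ m, IndepFun (T m) N μ)
    {s : Set β} (hs : MeasurableSet s) :
    μ {ω | T (N ω) ω ∈ s} = ∑' m, μ {ω | N ω = m} * μ {ω | T m ω ∈ s} := by
  have hunion : {ω | T (N ω) ω ∈ s} = ⋃ m, T m ⁻¹' s ∩ N ⁻¹' {m} := by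
    ext ω
    simp
  rw [hunion, measure_iUnion
    (fun m m' hmm' => Set.disjoint_left.2 fun ω hm hm' => hmm' (hm.2.symm.trans hm'.2))
    fun m => (hT m hs).inter (hN (measurableSet_singleton m))]
  exact tsum_congr fun m => ((hindep m).measure_inter_preimage_eq_mul _ _ hs
    (measurableSet_singleton m)).trans (mul_comm _ _)

theorem ProbabilityTheory.iIndepFun.indepFun_finsetSum_option {ι β : Type*} [MeasurableSpace β]
    [AddCommMonoid β] [MeasurableAdd₂ β] {N : Ω → β} {Y : ι → Ω → β}
    (h : iIndepFun (fun i : Option ι => Option.elim i N Y) μ) (hN : Measurable N)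
    (hY : ∀ n, Measurable (Y n)) (s : Finset ι) :
    IndepFun (fun ω => ∑ n ∈ s, Y n ω) N μ := by
  simpa [Finset.sum_fn] using h.indepFun_finsetSum_of_notMem (fun i => by cases i <;> simp [*])
    (s := s.map Function.Embedding.some) (i := none) (by simp)

theorem tsum_posGeometricMass_mul_measure_le {a b : ℝ} (ha₀ : 0 < a) (ha₁ : a ≤ 1)
    (hb₀ : 0 < b) (hb₁ : b ≤ 1) {T : ℕ → Ω → ℕ} (hT : ∀ m, Measurable (T m))
    (hlaw : ∀ m j, μ {ω | T m ω = j} = ENNReal.ofReal (m.multichoose j * b ^ m * (1 - b) ^ j))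
    (r : ℕ) :
    ∑' m, posGeometricMass a m * μ {ω | r ≤ T m ω}
      = ENNReal.ofReal ((1 - a * b / (1 - b + a * b)) ^ r) := by
  set c := a * b / (1 - b + a * b)
  have h1a : 0 ≤ 1 - a := sub_nonneg.2 ha₁
  have h1b : 0 ≤ 1 - b := sub_nonneg.2 hb₁
  have hD : 0 < 1 - b + a * b := by nlinarith
  have hc₀ : 0 < c := by positivity
  have hc₁ : c ≤ 1 := (div_le_one hD).2 (by linarith)
  have hab : |(1 - a) * b| < 1 := by
    rw [abs_of_nonneg (by positivity)]; nlinarith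
  have hmix : ∀ j, ∑' i, ENNReal.ofReal (a * (1 - a) ^ i) * μ {ω | T (i + 1) ω = j}
      = ENNReal.ofReal (c * (1 - c) ^ j) := by
    intro j
    have h := hasSum_geometric_mul_negBinomial hab j
    simp only [hlaw]
    rw [← h.tsum_eq, ENNReal.ofReal_tsum_of_nonneg (fun i => by positivity) h.summable]
    exact tsum_congr fun i => (ENNReal.ofReal_mul (by positivity)).symm
  calc ∑' m, posGeometricMass a m * μ {ω | r ≤ T m ω}
      = ∑' i, ENNReal.ofReal (a * (1 - a) ^ i) * ∑' j, μ {ω | T (i + 1) ω = j + r} := by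
        rw [tsum_eq_zero_add' ENNReal.summable]
        simp only [posGeometricMass, zero_mul, zero_add, measure_le_eq_tsum (hT _)]
    _ = ∑' j, ENNReal.ofReal (c * (1 - c) ^ (j + r)) := by
        simp only [← ENNReal.tsum_mul_left]
        rw [ENNReal.tsum_comm]
        exact tsum_congr fun j => hmix (j + r)
    _ = ENNReal.ofReal ((1 - c) ^ r) := tsum_ofReal_mul_geometric_tail hc₀ hc₁ r

end NatValued

theorem geometric_sum_stochastic_domination_general
    {Ω : Type*} [MeasurableSpace Ω] (μ : Measure Ω) [IsProbabilityMeasure μ]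
    (a b : ℝ) (ha : a ∈ Set.Ioo (0:ℝ) 1) (hb : b ∈ Set.Ioo (0:ℝ) 1)
    (N : Ω → ℕ) (X : ℕ → Ω → ℕ)
    (hNmeas : Measurable N) (hXmeas : ∀ n, Measurable (X n))
    (hNdom : ∀ k : ℕ, ENNReal.ofReal ((1 - a) ^ (k - 1)) ≤ μ {ω | k ≤ N ω})
    (hX : ∀ n, ∀ k : ℕ, 1 ≤ k →
      μ {ω | X n ω = k} = ENNReal.ofReal (b * (1 - b) ^ (k - 1)))
    (hindep : iIndepFun
      (fun i : Option ℕ => Option.elim i N X) μ) :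
    ∀ k : ℕ,
      ENNReal.ofReal ((1 - a * b / (1 - b + a * b)) ^ (k - 1))
        ≤ μ {ω | k ≤ 1 + ∑ n ∈ Finset.Icc 1 (N ω), (X n ω - 1)} := by
  intro k
  obtain ⟨ha₀, ha₁⟩ := ha
  obtain ⟨hb₀, hb₁⟩ := hb
  set Y : ℕ → Ω → ℕ := fun n ω => X n ω - 1
  set T : ℕ → Ω → ℕ := fun m ω => ∑ n ∈ Icc 1 m, Y n ω
  have hY_meas : ∀ n, Measurable (Y n) := fun n => (hXmeas n).sub_const 1
  have hT_meas : ∀ m, Measurable (T m) := fun m => by fun_prop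
  have hY_indep : iIndepFun (fun i : Option ℕ => Option.elim i N Y) μ := by
    convert hindep.comp (fun i => Option.elim i id fun _ t => t - 1)
      (by rintro (_ | n) <;> fun_prop) using 1
    ext (_ | n) <;> rfl
  have hY_law : ∀ n j, μ {ω | Y n ω = j} = ENNReal.ofReal (b * (1 - b) ^ j) := fun n =>
    measure_sub_one_eq (hXmeas n) (fun j => by simpa using hX n (j + 1) (by omega))
      (by simpa using tsum_ofReal_mul_geometric_tail hb₀ hb₁.le 0)
  have hT_law : ∀ m j, μ {ω | T m ω = j}
      = ENNReal.ofReal (m.multichoose j * b ^ m * (1 - b) ^ j) := fun m j => by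
    simpa using measure_sum_eq_negBinomial (hY_indep.precomp (Option.some_injective ℕ))
      hY_meas hb₀.le hb₁.le hY_law (Icc 1 m) j
  have hT_mono : Monotone fun m => μ {ω | k - 1 ≤ T m ω} := fun m m' hmm' =>
    measure_mono fun ω (hω : k - 1 ≤ T m ω) =>
      hω.trans (sum_le_sum_of_subset (Icc_subset_Icc_right hmm'))
  have hevent : {ω | k ≤ 1 + ∑ n ∈ Icc 1 (N ω), (X n ω - 1)}
      = {ω | T (N ω) ω ∈ Set.Ici (k - 1)} := by
    ext ω
    simp only [Set.mem_ofPred_eq, Set.mem_Ici, T, Y]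
    omega
  rw [hevent, measure_randomIndex_mem hNmeas hT_meas
    (fun m => hY_indep.indepFun_finsetSum_option hNmeas hY_meas _) measurableSet_Ici,
    ← tsum_posGeometricMass_mul_measure_le ha₀ ha₁.le hb₀ hb₁.le hT_meas hT_law]
  refine tsum_mul_le_tsum_mul_of_tail_le hT_mono fun j => ?_
  rw [tsum_posGeometricMass_tail ha₀ ha₁.le, ← measure_le_eq_tsum hNmeas]
  exact hNdom j

/-- **Stochastic domination for geometric sums of i.i.d. geometric variables.**
Let `a, b ∈ (0,1)`.  Let `N` be a random variable with values in the positive integers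
which stochastically dominates a geometric random variable with parameter `a`
(i.e. `P(N ≥ k) ≥ (1-a)^(k-1)` for every `k ≥ 1`), and let `(X n)` be i.i.d. geometric
random variables with parameter `b`, with the family `N, X 0, X 1, …` independent.
Then `S = 1 + ∑_{n=1}^{N} (X n - 1)` stochastically dominates a geometric random
variable with parameter `c = a*b / (1 - b + a*b)`, i.e. `P(S ≥ k) ≥ (1-c)^(k-1)`
for every `k ≥ 1` (the bound for `k ≤ 1` being trivial). -/
theorem geometric_sum_stochastic_domination
    {Ω : Type*} [MeasurableSpace Ω] (μ : Measure Ω) [IsProbabilityMeasure μ]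
    (a b : ℝ) (ha : a ∈ Set.Ioo (0:ℝ) 1) (hb : b ∈ Set.Ioo (0:ℝ) 1)
    (N : Ω → ℕ) (X : ℕ → Ω → ℕ)
    (hNmeas : Measurable N) (hXmeas : ∀ n, Measurable (X n))
    (hNpos : ∀ ω, 1 ≤ N ω)
    (hNdom : ∀ k : ℕ, ENNReal.ofReal ((1 - a) ^ (k - 1)) ≤ μ {ω | k ≤ N ω})
    (hX : ∀ n, ∀ k : ℕ, 1 ≤ k →
      μ {ω | X n ω = k} = ENNReal.ofReal (b * (1 - b) ^ (k - 1)))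
    (hindep : iIndepFun
      (fun i : Option ℕ => Option.elim i N X) μ) :
    ∀ k : ℕ,
      ENNReal.ofReal ((1 - a * b / (1 - b + a * b)) ^ (k - 1))
        ≤ μ {ω | k ≤ 1 + ∑ n ∈ Finset.Icc 1 (N ω), (X n ω - 1)} :=
  geometric_sum_stochastic_domination_general μ a b ha hb N X hNmeas hXmeas hNdom hX hindep
end
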